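/- Let D be a nonnegative divergence defined on pairs of probability measures on ℝ satisfying: (reflexivity) D(μ, μ) = 0 for all μ; (T, translation nonexpansion) D((x ↦ x+t)_#μ, (x ↦ x+t)_#ν) ≤ D(μ, ν) for all t ∈ ℝ and all μ, ν; and (S, scale-contraction) there is a nondecreasing function c : [0,1] → [0,∞) with D((x ↦ s·x)_#μ, (x ↦ s·x)_#ν) ≤ c(s)·D(μ, ν) for all s ∈ [0,1] and all μ, ν. Define the max-sliced lift on probability measures on ℝ^d by MS-D(μ, ν) = sup over unit vectors θ ∈ ℝ^d of D((P_θ)_#μ, (P_θ)_#ν), where P_θ(x) = ⟨θ, x⟩. Let F(x) = Ax + b with A ∈ ℝ^{d×d}, b ∈ ℝ^d, and L = ‖A‖_op ∈ [0,1]. Then for all probability measures μ, ν on ℝ^d, MS-D(F_#μ, F_#ν) ≤ c(L) · MS-D(μ, ν). -/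

import Mathlib

open MeasureTheory

/-- The spectral norm (`ℓ² → ℓ²` operator norm) of a real matrix. -/
noncomputable def specNorm {m n : Type*} [Fintype m] [Fintype n] [DecidableEq n]
    (A : Matrix m n ℝ) : ℝ :=
  ‖LinearMap.toContinuousLinearMap (Matrix.toEuclideanLin A)‖

/-- The max-sliced lift of a divergence `D` on probability measures on `ℝ` to probability
measures on `ℝ^d`: `MS-D(μ,ν) = sup_{‖θ‖=1} D((P_θ)_#μ, (P_θ)_#ν)` with `P_θ(x) = ⟪θ, x⟫`
(valued in `ℝ≥0∞`, via `ENNReal.ofReal`, so that the supremum is always well defined). -/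
noncomputable def msLift {d : ℕ} (D : Measure ℝ → Measure ℝ → ℝ)
    (μ ν : Measure (EuclideanSpace ℝ (Fin d))) : ENNReal :=
  ⨆ θ : { θ : EuclideanSpace ℝ (Fin d) // ‖θ‖ = 1 },
    ENNReal.ofReal
      (D (μ.map fun x => (inner ℝ (θ : EuclideanSpace ℝ (Fin d)) x : ℝ))
         (ν.map fun x => (inner ℝ (θ : EuclideanSpace ℝ (Fin d)) x : ℝ)))

/-- Max-sliced affine push-forward contraction: if a nonnegative divergence
`D` on probability measures on `ℝ` is reflexive, translation-nonexpansive, and scale-contractive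
with nondecreasing rate `c : [0,1] → [0,∞)`, then for `F(x) = Ax + b` with `L = ‖A‖_op ∈ [0,1]`,
`MS-D(F_#μ, F_#ν) ≤ c(L) · MS-D(μ, ν)`. -/
theorem max_sliced_affine_pushforward_contraction {d : ℕ}
    (D : Measure ℝ → Measure ℝ → ℝ)
    (hD0 : ∀ μ ν : Measure ℝ, IsProbabilityMeasure μ → IsProbabilityMeasure ν → 0 ≤ D μ ν)
    (hrefl : ∀ μ : Measure ℝ, IsProbabilityMeasure μ → D μ μ = 0)
    (hT : ∀ (t : ℝ) (μ ν : Measure ℝ), IsProbabilityMeasure μ → IsProbabilityMeasure ν →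
      D (μ.map fun x => x + t) (ν.map fun x => x + t) ≤ D μ ν)
    (c : ℝ → ℝ) (hc_mono : MonotoneOn c (Set.Icc 0 1))
    (hc_nonneg : ∀ s ∈ Set.Icc (0 : ℝ) 1, 0 ≤ c s)
    (hS : ∀ s ∈ Set.Icc (0 : ℝ) 1, ∀ μ ν : Measure ℝ,
      IsProbabilityMeasure μ → IsProbabilityMeasure ν →
      D (μ.map fun x => s * x) (ν.map fun x => s * x) ≤ c s * D μ ν)
    (A : Matrix (Fin d) (Fin d) ℝ) (b : EuclideanSpace ℝ (Fin d))
    (hL : specNorm A ≤ 1)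
    (μ ν : Measure (EuclideanSpace ℝ (Fin d)))
    [IsProbabilityMeasure μ] [IsProbabilityMeasure ν] :
    msLift D (μ.map fun x => Matrix.toEuclideanLin A x + b)
        (ν.map fun x => Matrix.toEuclideanLin A x + b) ≤
      ENNReal.ofReal (c (specNorm A)) * msLift D μ ν := by
  classical
  set T : EuclideanSpace ℝ (Fin d) →L[ℝ] EuclideanSpace ℝ (Fin d) :=
    LinearMap.toContinuousLinearMap (Matrix.toEuclideanLin A) with hTdef
  have hLnn : (0 : ℝ) ≤ specNorm A := norm_nonneg (LinearMap.toContinuousLinearMap (Matrix.toEuclideanLin A))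
  have hLmem : specNorm A ∈ Set.Icc (0 : ℝ) 1 := ⟨hLnn, hL⟩
  have hF : (fun x : EuclideanSpace ℝ (Fin d) => Matrix.toEuclideanLin A x + b) =
      fun x => T x + b := rfl
  have hFmeas : Measurable fun x : EuclideanSpace ℝ (Fin d) => T x + b :=
    (T.continuous.add continuous_const).measurable
  rw [hF, msLift]
  refine iSup_le fun θ => ?_
  set w : EuclideanSpace ℝ (Fin d) := ContinuousLinearMap.adjoint T θ.1 with hwdef
  set s : ℝ := ‖w‖ with hsdef
  have hsL : s ≤ specNorm A := by
    have h1 : ‖(ContinuousLinearMap.adjoint T) θ.1‖ ≤ ‖ContinuousLinearMap.adjoint T‖ * ‖θ.1‖ :=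
      (ContinuousLinearMap.adjoint T).le_opNorm θ.1
    have h2 : ‖ContinuousLinearMap.adjoint T‖ = ‖T‖ :=
      LinearIsometryEquiv.norm_map ContinuousLinearMap.adjoint T
    rw [h2, θ.2, mul_one] at h1
    exact h1
  have hsmem : s ∈ Set.Icc (0 : ℝ) 1 := ⟨norm_nonneg _, hsL.trans hL⟩
  set η : EuclideanSpace ℝ (Fin d) := if h : s = 0 then θ.1 else s⁻¹ • w with hηdef
  have hη : ‖η‖ = 1 := by
    by_cases h : s = 0
    · simp [hηdef, h, θ.2]
    · rw [hηdef, dif_neg h, norm_smul, norm_inv, Real.norm_eq_abs,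
        abs_of_nonneg hsmem.1, ← hsdef, inv_mul_cancel₀ h]
  have hws : ∀ x : EuclideanSpace ℝ (Fin d), (inner ℝ w x : ℝ) = s * inner ℝ η x := by
    intro x
    by_cases h : s = 0
    · have hw0 : w = 0 := by rwa [hsdef, norm_eq_zero] at h
      simp [hw0, h]
    · rw [hηdef, dif_neg h, real_inner_smul_left]
      field_simp
  set t : ℝ := inner ℝ θ.1 b with htdef
  have hkey : (fun x : EuclideanSpace ℝ (Fin d) => (inner ℝ θ.1 (T x + b) : ℝ)) =
      (fun y : ℝ => y + t) ∘ (fun y : ℝ => s * y) ∘ (fun x => (inner ℝ η x : ℝ)) := by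
    funext x
    simp only [Function.comp_apply, inner_add_right, htdef]
    congr 1
    rw [← hws x, hwdef, ContinuousLinearMap.adjoint_inner_left]
  have mη : Measurable fun x : EuclideanSpace ℝ (Fin d) => (inner ℝ η x : ℝ) :=
    (continuous_const.inner continuous_id).measurable
  have mθ : Measurable fun x : EuclideanSpace ℝ (Fin d) => (inner ℝ θ.1 x : ℝ) :=
    (continuous_const.inner continuous_id).measurable
  have ms : Measurable fun y : ℝ => s * y := (continuous_const.mul continuous_id).measurable
  have mt : Measurable fun y : ℝ => y + t := (continuous_id.add continuous_const).measurable
  have hmapeq : ∀ ρ : Measure (EuclideanSpace ℝ (Fin d)),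
      (ρ.map fun x => T x + b).map (fun x => (inner ℝ θ.1 x : ℝ)) =
        (((ρ.map fun x => (inner ℝ η x : ℝ)).map fun y => s * y).map fun y => y + t) := by
    intro ρ
    rw [Measure.map_map mθ hFmeas,
      Measure.map_map mt ms, Measure.map_map (mt.comp ms) mη]
    exact congrArg (fun f => Measure.map f ρ) hkey
  rw [hmapeq μ, hmapeq ν]
  haveI h1μ : IsProbabilityMeasure (μ.map fun x => (inner ℝ η x : ℝ)) :=
    Measure.isProbabilityMeasure_map mη.aemeasurable
  haveI h1ν : IsProbabilityMeasure (ν.map fun x => (inner ℝ η x : ℝ)) :=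
    Measure.isProbabilityMeasure_map mη.aemeasurable
  haveI h2μ : IsProbabilityMeasure ((μ.map fun x => (inner ℝ η x : ℝ)).map fun y => s * y) :=
    Measure.isProbabilityMeasure_map ms.aemeasurable
  haveI h2ν : IsProbabilityMeasure ((ν.map fun x => (inner ℝ η x : ℝ)).map fun y => s * y) :=
    Measure.isProbabilityMeasure_map ms.aemeasurable
  have hDη : 0 ≤ D (μ.map fun x => (inner ℝ η x : ℝ)) (ν.map fun x => (inner ℝ η x : ℝ)) :=
    hD0 _ _ h1μ h1ν
  have step1 := hT t _ _ h2μ h2ν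
  have step2 := hS s hsmem _ _ h1μ h1ν
  have step3 : c s * D (μ.map fun x => (inner ℝ η x : ℝ)) (ν.map fun x => (inner ℝ η x : ℝ)) ≤
      c (specNorm A) * D (μ.map fun x => (inner ℝ η x : ℝ)) (ν.map fun x => (inner ℝ η x : ℝ)) :=
    mul_le_mul_of_nonneg_right (hc_mono hsmem hLmem hsL) hDη
  have hchain := (step1.trans step2).trans step3
  have final : ENNReal.ofReal
      (D (((μ.map fun x => (inner ℝ η x : ℝ)).map fun y => s * y).map fun y => y + t)
         (((ν.map fun x => (inner ℝ η x : ℝ)).map fun y => s * y).map fun y => y + t)) ≤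
      ENNReal.ofReal (c (specNorm A)) * ENNReal.ofReal
        (D (μ.map fun x => (inner ℝ η x : ℝ)) (ν.map fun x => (inner ℝ η x : ℝ))) := by
    rw [← ENNReal.ofReal_mul (hc_nonneg _ hLmem)]
    exact ENNReal.ofReal_le_ofReal hchain
  refine final.trans (mul_le_mul_right ?_ _)
  exact le_iSup (fun θ' : { θ : EuclideanSpace ℝ (Fin d) // ‖θ‖ = 1 } =>
    ENNReal.ofReal
      (D (μ.map fun x => (inner ℝ (θ' : EuclideanSpace ℝ (Fin d)) x : ℝ))
         (ν.map fun x => (inner ℝ (θ' : EuclideanSpace ℝ (Fin d)) x : ℝ)))) ⟨η, hη⟩
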